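/- arXiv:1510.00811 — 3 statements merged into one kernel-verified Lean document; each statement's English description precedes it below -/
import Mathlib

section
/- For every graph G with maximum degree Δ ≥ 1 and matching number ν ≥ 1, the number of edges of G satisfies e(G) ≤ νΔ + ⌊Δ/2⌋·⌊ν/⌈Δ/2⌉⌋. -/
open SimpleGraph

/-- The matching number of a graph: the maximum number of edges in a matching. -/
noncomputable def matchingNumber {V : Type*} (G : SimpleGraph V) : ℕ :=
  sSup {m | ∃ M : G.Subgraph, M.IsMatching ∧ M.edgeSet.ncard = m}

/-!
Induct on the number of edges. If some non-isolated vertex `v` is covered by every maximum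
matching, deleting the edges at `v` lowers `ν` by one and removes at most `Δ` edges. Otherwise
every vertex is missed by some maximum matching, and Gallai's lemma says that a fixed maximum
matching then leaves at most one vertex of each component unmatched. A component with `m`
matching edges thus has at most `2m + 1` vertices, hence at most `mΔ + ⌊Δ/2⌋` edges, and at most
`m(2m + 1) ≤ mΔ` edges when `m < ⌈Δ/2⌉`. At most `ν / ⌈Δ/2⌉` components have `m ≥ ⌈Δ/2⌉`, and
summing over the components gives the bound.
-/

open Finset Function

theorem Function.Involutive.card_eq_two_mul_card_image_sym2 {α : Type*} [DecidableEq α]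
    {f : α → α} (hf : Involutive f) {s : Finset α} (hs : ∀ a ∈ s, f a ∈ s)
    (hfix : ∀ a ∈ s, f a ≠ a) : #s = 2 * #(s.image fun a => s(a, f a)) := by
  rw [card_eq_sum_card_image (fun a => s(a, f a)), mul_comm, ← smul_eq_mul, ← sum_const]
  refine sum_congr rfl fun e he => ?_
  obtain ⟨a, ha, rfl⟩ := mem_image.1 he
  have hfiber : {b ∈ s | s(b, f b) = s(a, f a)} = {a, f a} := by
    ext b
    simp only [mem_filter, mem_insert, mem_singleton, Sym2.eq_iff]
    constructor
    · rintro ⟨-, ⟨rfl, -⟩ | ⟨rfl, -⟩⟩ <;> simp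
    · rintro (rfl | rfl)
      · exact ⟨ha, .inl ⟨rfl, rfl⟩⟩
      · exact ⟨hs a ha, .inr ⟨rfl, hf a⟩⟩
  rw [hfiber, card_pair (hfix a ha).symm]

theorem Function.Involutive.even_card_of_forall_ne {α : Type*} {f : α → α} (hf : Involutive f)
    {s : Finset α} (hs : ∀ a ∈ s, f a ∈ s) (hfix : ∀ a ∈ s, f a ≠ a) : Even #s := by
  classical
  exact ⟨_, (hf.card_eq_two_mul_card_image_sym2 hs hfix).trans (two_mul _)⟩

/-- `O` is the orbit of `u` under `σ = f ∘ g`, on which `f` and `g` act as the reflections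
`σ ^ i u ↦ σ ^ (-i) u` and `σ ^ i u ↦ σ ^ (-i-1) u`: for odd period only `u` is fixed by `f`,
for even period nothing is fixed by `g`. -/
theorem Function.Involutive.exists_invariant_finset {α : Type*} [Finite α] {f g : α → α}
    (hf : Involutive f) (hg : Involutive g) {u : α} (hu : f u = u) :
    ∃ O : Finset α, u ∈ O ∧ (∀ v ∈ O, f v ∈ O) ∧ (∀ v ∈ O, g v ∈ O) ∧
      ((∀ v ∈ O, f v = v → v = u) ∨ ∀ v ∈ O, g v ≠ v) := by
  classical
  have := Fintype.ofFinite α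
  set σ : Equiv.Perm α := hf.toPerm f * hg.toPerm g
  have hfσ : ∀ (i : ℤ) x, f ((σ ^ i) x) = (σ ^ (-i)) (f x) := by
    have hconj : SemiconjBy (hf.toPerm f) σ σ⁻¹ := by
      ext x
      simp [σ, hf (g x)]
    intro i x
    simpa [inv_zpow'] using congrArg (· x) (hconj.zpow_right i).eq
  have hgσ : ∀ x, g x = f (σ x) := fun x => (hf (g x)).symm
  have hσ : ∀ i : ℤ, σ ((σ ^ i) u) = (σ ^ (i + 1)) u := fun i => by
    rw [← Equiv.Perm.mul_apply, ← zpow_one_add, add_comm]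
  set r := minimalPeriod σ u
  have hper : ∀ i : ℤ, (σ ^ i) u = u ↔ (r : ℤ) ∣ i := fun i => by
    simpa [Equiv.Perm.smul_def] using
      MulAction.zpow_smul_eq_iff_minimalPeriod_dvd (a := σ) (b := u) (n := i)
  have hpow : ∀ i j : ℤ, (σ ^ i) u = (σ ^ j) u ↔ (r : ℤ) ∣ j - i := fun i j => by
    rw [← (σ ^ (-i)).apply_eq_iff_eq, ← Equiv.Perm.mul_apply, ← Equiv.Perm.mul_apply, ← zpow_add,
      ← zpow_add, neg_add_cancel, zpow_zero, Equiv.Perm.one_apply, eq_comm, neg_add_eq_sub, hper]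
  refine ⟨({v | σ.SameCycle u v} : Finset α), mem_filter.2 ⟨mem_univ _, .refl _ _⟩, ?_, ?_, ?_⟩ <;>
    simp only [mem_filter, mem_univ, true_and]
  · rintro _ ⟨i, rfl⟩
    exact ⟨-i, by rw [hfσ, hu]⟩
  · rintro _ ⟨i, rfl⟩
    exact ⟨-(i + 1), by rw [hgσ, hσ, hfσ, hu]⟩
  rcases Nat.even_or_odd r with ⟨t, ht⟩ | ⟨t, ht⟩
  · refine .inr ?_
    rintro _ ⟨i, rfl⟩ hfix
    rw [hgσ, hσ, hfσ, hu, hpow] at hfix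
    have : (2 : ℤ) ∣ i - -(i + 1) := dvd_trans ⟨t, by rw [ht]; push_cast; ring⟩ hfix
    omega
  · refine .inl ?_
    rintro _ ⟨i, rfl⟩ hfix
    rw [hfσ, hu, hpow, ht] at hfix
    rw [hper, ht]
    have hi := dvd_sub (dvd_mul_of_dvd_right hfix (t + 1 : ℤ)) (dvd_mul_left _ i)
    rwa [show ((t : ℤ) + 1) * (i - -i) - i * ((2 * t + 1 : ℕ) : ℤ) = i by push_cast; ring] at hi

section MovedPoints

variable {α : Type*} [Fintype α] [DecidableEq α]

def movedPoints (f : α → α) : Finset α :=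
  {v | f v ≠ v}

@[simp]
theorem mem_movedPoints {f : α → α} {v : α} : v ∈ movedPoints f ↔ f v ≠ v := by
  simp [movedPoints]

theorem Function.Involutive.even_card_movedPoints {f : α → α} (hf : Involutive f) :
    Even #(movedPoints f) :=
  hf.even_card_of_forall_ne (fun a ha => by simpa [hf a, eq_comm] using ha)
    fun _ => mem_movedPoints.1

theorem card_movedPoints_add_card_filter_fixed (f : α → α) (O : Finset α) :
    #(movedPoints f) + #{v ∈ O | f v = v} = #O + #(movedPoints f \ O) := by
  have hinter : movedPoints f ∩ O = {v ∈ O | ¬f v = v} := by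
    ext v
    simp [and_comm]
  have hsplit := card_inter_add_card_sdiff (movedPoints f) O
  have hfixed := card_filter_add_card_filter_not (s := O) (fun v => f v = v)
  rw [hinter] at hsplit
  omega

theorem card_movedPoints_piecewise_add (O : Finset α) (f g : α → α) :
    #(movedPoints (O.piecewise f g)) + #{v ∈ O | f v = v} =
      #(movedPoints g) + #{v ∈ O | g v = v} := by
  have hO : {v ∈ O | O.piecewise f g v = v} = {v ∈ O | f v = v} :=
    filter_congr fun v hv => by rw [O.piecewise_eq_of_mem f g hv]
  have hcompl : movedPoints (O.piecewise f g) \ O = movedPoints g \ O := by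
    ext v
    by_cases hv : v ∈ O <;> simp [hv]
  rw [← hO, card_movedPoints_add_card_filter_fixed, hcompl,
    ← card_movedPoints_add_card_filter_fixed]

end MovedPoints

def componentBound (d m : ℕ) : ℕ :=
  m * d + if (d + 1) / 2 ≤ m then d / 2 else 0

def chvatalHansonBound (d m : ℕ) : ℕ :=
  m * d + d / 2 * (m / ((d + 1) / 2))

theorem le_two_mul_componentBound {D n d m : ℕ} (hD : Even D) (hnd : D ≤ n * d)
    (hnn : D ≤ n * (n - 1)) (hn : n ≤ 2 * m + 1) : D ≤ 2 * componentBound d m := by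
  unfold componentBound
  split_ifs with hm
  · have : D ≤ 2 * (m * d) + d := hnd.trans <| (Nat.mul_le_mul_right d hn).trans_eq (by ring)
    obtain ⟨c, rfl⟩ := hD
    omega
  · have : n * (n - 1) ≤ 2 * (m * d) :=
      calc n * (n - 1) ≤ (2 * m + 1) * (2 * m) := Nat.mul_le_mul hn (by omega)
        _ ≤ d * (2 * m) := Nat.mul_le_mul_right _ (by omega)
        _ = 2 * (m * d) := by ring
    omega

theorem sum_componentBound_le {ι : Type*} (s : Finset ι) (d : ℕ) (m : ι → ℕ) :
    ∑ i ∈ s, componentBound d (m i) ≤ chvatalHansonBound d (∑ i ∈ s, m i) := by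
  unfold componentBound chvatalHansonBound
  rw [sum_add_distrib, ← sum_mul, ← sum_filter, sum_const, smul_eq_mul, mul_comm _ (d / 2)]
  rcases Nat.eq_zero_or_pos ((d + 1) / 2) with hk | hk
  · obtain rfl : d = 0 := by omega
    simp
  gcongr
  rw [Nat.le_div_iff_mul_le hk]
  calc #{i ∈ s | (d + 1) / 2 ≤ m i} * ((d + 1) / 2) ≤ ∑ i ∈ s with (d + 1) / 2 ≤ m i, m i := by
        simpa using card_nsmul_le_sum _ m _ fun i hi => (mem_filter.1 hi).2
    _ ≤ ∑ i ∈ s, m i := sum_le_sum_of_subset (filter_subset _ _)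

theorem chvatalHansonBound_mono (d : ℕ) : Monotone (chvatalHansonBound d) := fun a b hab => by
  unfold chvatalHansonBound
  gcongr

theorem chvatalHansonBound_add_le_succ (d m : ℕ) :
    chvatalHansonBound d m + d ≤ chvatalHansonBound d (m + 1) := by
  unfold chvatalHansonBound
  have : d / 2 * (m / ((d + 1) / 2)) ≤ d / 2 * ((m + 1) / ((d + 1) / 2)) := by
    gcongr
    omega
  rw [add_mul, one_mul]
  omega

namespace SimpleGraph

variable {V : Type*} {G : SimpleGraph V}

/-- A matching, encoded as the involution exchanging the ends of each matching edge; the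
unmatched vertices are its fixed points. -/
structure IsMatchingInvolution (G : SimpleGraph V) (f : V → V) : Prop where
  involutive : Involutive f
  adj : ∀ v, f v ≠ v → G.Adj v (f v)

theorem IsMatchingInvolution.mono {H : SimpleGraph V} {f : V → V}
    (hf : G.IsMatchingInvolution f) (hle : G ≤ H) : H.IsMatchingInvolution f :=
  ⟨hf.involutive, fun v hv => hle (hf.adj v hv)⟩

theorem IsMatchingInvolution.piecewise [DecidableEq V] {f g : V → V}
    (hf : G.IsMatchingInvolution f) (hg : G.IsMatchingInvolution g) {O : Finset V}
    (hfO : ∀ v ∈ O, f v ∈ O) (hgO : ∀ v ∈ O, g v ∈ O) :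
    G.IsMatchingInvolution (O.piecewise f g) := by
  have hgO' : ∀ v ∉ O, g v ∉ O := fun v hv hgv => hv (hg.involutive v ▸ hgO _ hgv)
  refine ⟨fun v => ?_, fun v => ?_⟩ <;> by_cases hv : v ∈ O
  · simp [hv, hfO v hv, hf.involutive v]
  · simp [hv, hgO' v hv, hg.involutive v]
  · simpa [hv] using hf.adj v
  · simpa [hv] using hg.adj v

variable [Fintype V] [DecidableEq V]

structure IsMaxMatchingInvolution (G : SimpleGraph V) (f : V → V) : Prop
    extends G.IsMatchingInvolution f where
  card_movedPoints_le : ∀ g, G.IsMatchingInvolution g → #(movedPoints g) ≤ #(movedPoints f)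

theorem exists_isMaxMatchingInvolution (G : SimpleGraph V) :
    ∃ f, G.IsMaxMatchingInvolution f := by
  obtain ⟨f, hf, hmax⟩ := Set.exists_max_image {f | G.IsMatchingInvolution f}
    (fun f => #(movedPoints f)) (Set.toFinite _) ⟨id, fun _ => rfl, fun _ h => absurd rfl h⟩
  exact ⟨f, hf, hmax⟩

theorem IsMaxMatchingInvolution.card_filter_fixed_le {f g : V → V}
    (hf : G.IsMaxMatchingInvolution f) (hg : G.IsMatchingInvolution g) {O : Finset V}
    (hfO : ∀ v ∈ O, f v ∈ O) (hgO : ∀ v ∈ O, g v ∈ O) :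
    #{v ∈ O | f v = v} ≤ #{v ∈ O | g v = v} := by
  have hexchange := card_movedPoints_piecewise_add O g f
  have := hf.card_movedPoints_le _ (hg.piecewise hf.toIsMatchingInvolution hgO hfO)
  omega

theorem IsMaxMatchingInvolution.piecewise {f g : V → V} (hf : G.IsMaxMatchingInvolution f)
    (hg : G.IsMaxMatchingInvolution g) {O : Finset V} (hfO : ∀ v ∈ O, f v ∈ O)
    (hgO : ∀ v ∈ O, g v ∈ O) : G.IsMaxMatchingInvolution (O.piecewise f g) := by
  refine ⟨hf.toIsMatchingInvolution.piecewise hg.toIsMatchingInvolution hfO hgO, fun h hh => ?_⟩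
  have hexchange := card_movedPoints_piecewise_add O f g
  have := hf.card_filter_fixed_le hg.toIsMatchingInvolution hfO hgO
  have := hg.card_movedPoints_le h hh
  omega

theorem IsMaxMatchingInvolution.not_adj {f : V → V} (hf : G.IsMaxMatchingInvolution f)
    {u v : V} (hu : f u = u) (hv : f v = v) : ¬G.Adj u v := by
  intro huv
  have hswap : G.IsMatchingInvolution (Equiv.swap u v) := by
    refine ⟨Equiv.swap_apply_self u v, fun w hw => ?_⟩
    rcases eq_or_ne w u with rfl | hwu
    · simpa using huv
    rcases eq_or_ne w v with rfl | hwv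
    · simpa using huv.symm
    · exact absurd (Equiv.swap_apply_of_ne_of_ne hwu hwv) hw
  have := hf.card_filter_fixed_le hswap (O := {u, v}) (by simp [hu, hv]) (by simp)
  simp [filter_insert, filter_singleton, hu, hv, huv.ne, huv.ne.symm] at this

theorem IsMaxMatchingInvolution.eq_of_reachable
    (hall : ∀ w, ∃ g, G.IsMaxMatchingInvolution g ∧ g w = w) {f : V → V}
    (hf : G.IsMaxMatchingInvolution f) {u v : V} (hu : f u = u) (hv : f v = v)
    (huv : G.Reachable u v) : u = v := by
  obtain ⟨p⟩ := huv
  induction p generalizing f with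
  | nil => rfl
  | @cons u w v hadj q ih =>
    by_contra hne
    obtain ⟨g, hg, hgw⟩ := hall w
    -- Both matchings are maximum, so they fix equally many points of `O`, and exchanging them on
    -- `O` gives a maximum matching fixing either `w` and `v` or the adjacent `u` and `w`.
    obtain ⟨O, huO, hfO, hgO, hO⟩ := hf.involutive.exists_invariant_finset hg.involutive hu
    rcases hO with hfix | hgfix
    · have hvO : v ∉ O := fun hvO => hne (hfix v hvO hv).symm
      by_cases hwO : w ∈ O
      · exact hvO (ih (hg.piecewise hf hgO hfO) (by simp [hwO, hgw]) (by simp [hvO, hv]) ▸ hwO)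
      · exact (hf.piecewise hg hfO hgO).not_adj (by simp [huO, hu]) (by simp [hwO, hgw]) hadj
    · have hpos : 0 < #{x ∈ O | f x = x} := card_pos.2 ⟨u, by simp [huO, hu]⟩
      have hfg := hf.card_filter_fixed_le hg.toIsMatchingInvolution hfO hgO
      rw [filter_false_of_mem hgfix, card_empty] at hfg
      omega

theorem IsMaxMatchingInvolution.card_component_le [DecidableEq G.ConnectedComponent]
    (hall : ∀ w, ∃ g, G.IsMaxMatchingInvolution g ∧ g w = w) {f : V → V}
    (hf : G.IsMaxMatchingInvolution f) (C : G.ConnectedComponent) :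
    #{v | G.connectedComponentMk v = C} ≤
      2 * (#{v ∈ movedPoints f | G.connectedComponentMk v = C} / 2) + 1 := by
  set S : Finset V := {v | G.connectedComponentMk v = C}
  set s : Finset V := {v ∈ movedPoints f | G.connectedComponentMk v = C}
  have hs_even : Even #s := hf.involutive.even_card_of_forall_ne
    (fun v hv => by
      simp only [s, mem_filter, mem_movedPoints] at hv ⊢
      exact ⟨by rw [hf.involutive v]; exact Ne.symm hv.1,
        (ConnectedComponent.connectedComponentMk_eq_of_adj (hf.adj v hv.1)).symm.trans hv.2⟩)
    fun v hv => mem_movedPoints.1 (mem_filter.1 hv).1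
  have hfixed : #{v ∈ S | f v = v} ≤ 1 := card_le_one.2 fun a ha b hb => by
    simp only [S, mem_filter, mem_univ, true_and] at ha hb
    exact hf.eq_of_reachable hall ha.2 hb.2 (ConnectedComponent.exact (ha.1.trans hb.1.symm))
  have hmoved : {v ∈ S | ¬f v = v} = s := by
    ext v
    simp [S, s, and_comm]
  have hsplit := card_filter_add_card_filter_not (s := S) (fun v => f v = v)
  obtain ⟨c, hc⟩ := hs_even
  rw [hmoved] at hsplit
  omega

theorem IsMatchingInvolution.card_movedPoints_div_two_le_matchingNumber {f : V → V}
    (hf : G.IsMatchingInvolution f) : #(movedPoints f) / 2 ≤ matchingNumber G := by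
  obtain ⟨M, hMverts, hMadj⟩ : ∃ M : G.Subgraph,
      M.verts = movedPoints f ∧ ∀ a b, M.Adj a b ↔ f a = b ∧ a ≠ b :=
    ⟨{ verts := movedPoints f
       Adj a b := f a = b ∧ a ≠ b
       adj_sub := by rintro a _ ⟨rfl, h⟩; exact hf.adj a h.symm
       edge_vert := by rintro a _ ⟨rfl, h⟩; simpa using h.symm
       symm := ⟨fun a _ ⟨h, hne⟩ => ⟨h ▸ hf.involutive a, hne.symm⟩⟩ }, rfl, fun _ _ => Iff.rfl⟩
  have hmatching : M.IsMatching := by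
    intro v hv
    rw [hMverts, mem_coe, mem_movedPoints] at hv
    exact ⟨f v, (hMadj _ _).2 ⟨rfl, hv.symm⟩, fun w hw => ((hMadj _ _).1 hw).1.symm⟩
  have hedges : M.edgeSet = (movedPoints f).image fun a => s(a, f a) := by
    ext e
    induction e using Sym2.ind with
    | _ a b =>
      simp only [Subgraph.mem_edgeSet, hMadj, coe_image, Set.mem_image, mem_coe, mem_movedPoints]
      constructor
      · rintro ⟨rfl, h⟩
        exact ⟨a, Ne.symm h, rfl⟩
      · rintro ⟨c, hc, he⟩
        rcases Sym2.eq_iff.1 he with ⟨rfl, rfl⟩ | ⟨rfl, rfl⟩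
        exacts [⟨rfl, Ne.symm hc⟩, ⟨hf.involutive c, hc⟩]
  have hcard : M.edgeSet.ncard = #(movedPoints f) / 2 := by
    rw [hedges, Set.ncard_coe_finset, hf.involutive.card_eq_two_mul_card_image_sym2
      (fun a ha => by simpa [hf.involutive a, eq_comm] using ha) (fun a => mem_movedPoints.1),
      Nat.mul_div_cancel_left _ two_pos]
  exact le_csSup ⟨Nat.card (Sym2 V), by rintro _ ⟨M, -, rfl⟩; exact Set.ncard_le_card _⟩
    ⟨M, hmatching, hcard⟩

variable [DecidableRel G.Adj]

theorem even_sum_degree_of_forall_adj_mem {S : Finset V}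
    (hS : ∀ v ∈ S, ∀ w, G.Adj v w → w ∈ S) : Even (∑ v ∈ S, G.degree v) := by
  have hdarts : ∑ v ∈ S, G.degree v = #{d : G.Dart | d.fst ∈ S} := by
    rw [card_eq_sum_card_fiberwise (f := fun d : G.Dart => d.fst) (s := {d | d.fst ∈ S}) (t := S)
      fun d hd => by simpa using hd]
    refine sum_congr rfl fun v hv => ?_
    rw [← dart_fst_fiber_card_eq_degree, filter_filter]
    congr 1
    ext d
    simp only [mem_filter, mem_univ, true_and]
    exact ⟨fun h => ⟨h ▸ hv, h⟩, And.right⟩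
  have hsymm : Involutive (Dart.symm : G.Dart → G.Dart) := Dart.symm_symm
  rw [hdarts]
  refine hsymm.even_card_of_forall_ne (fun d hd => ?_) fun d _ => d.symm_ne
  simp only [mem_filter, mem_univ, true_and, Dart.symm_toProd, Prod.fst_swap] at hd ⊢
  exact hS _ hd _ d.adj

theorem sum_degree_le_two_mul_componentBound {S : Finset V}
    (hS : ∀ v ∈ S, ∀ w, G.Adj v w → w ∈ S) {d m : ℕ} (hdeg : ∀ v, G.degree v ≤ d)
    (hcard : #S ≤ 2 * m + 1) : ∑ v ∈ S, G.degree v ≤ 2 * componentBound d m := by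
  have hdegS : ∀ v ∈ S, G.degree v ≤ #S - 1 := fun v hv => by
    rw [← card_neighborFinset_eq_degree, ← card_erase_of_mem hv]
    refine card_le_card fun w hw => ?_
    rw [mem_neighborFinset] at hw
    exact mem_erase.2 ⟨hw.ne', hS v hv w hw⟩
  refine le_two_mul_componentBound (even_sum_degree_of_forall_adj_mem hS) ?_ ?_ hcard
  · simpa using sum_le_card_nsmul S _ d fun v _ => hdeg v
  · simpa using sum_le_card_nsmul S _ _ hdegS

theorem card_edgeFinset_le_of_forall_exists_fixed {d : ℕ} (hdeg : ∀ v, G.degree v ≤ d)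
    (hall : ∀ w, ∃ g, G.IsMaxMatchingInvolution g ∧ g w = w) {f : V → V}
    (hf : G.IsMaxMatchingInvolution f) :
    #G.edgeFinset ≤ chvatalHansonBound d (#(movedPoints f) / 2) := by
  classical
  set κ := G.connectedComponentMk
  let S (C : G.ConnectedComponent) : Finset V := {v | κ v = C}
  let s (C : G.ConnectedComponent) : Finset V := {v ∈ movedPoints f | κ v = C}
  have hS : ∀ C, ∀ v ∈ S C, ∀ w, G.Adj v w → w ∈ S C := fun C v hv w hvw => by
    simp only [S, mem_filter, mem_univ, true_and] at hv ⊢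
    exact (ConnectedComponent.connectedComponentMk_eq_of_adj hvw).symm.trans hv
  have hsum : ∑ C, #(s C) / 2 ≤ #(movedPoints f) / 2 := by
    rw [Nat.le_div_iff_mul_le two_pos, sum_mul]
    calc ∑ C, #(s C) / 2 * 2 ≤ ∑ C, #(s C) := sum_le_sum fun C _ => Nat.div_mul_le_self _ _
      _ = #(movedPoints f) := (card_eq_sum_card_fiberwise fun v _ => mem_univ (κ v)).symm
  have h2E : 2 * #G.edgeFinset ≤ 2 * ∑ C, componentBound d (#(s C) / 2) := by
    rw [← sum_degrees_eq_twice_card_edges, ← sum_fiberwise univ κ, mul_sum]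
    exact sum_le_sum fun C _ =>
      sum_degree_le_two_mul_componentBound (hS C) hdeg (hf.card_component_le hall C)
  calc #G.edgeFinset ≤ ∑ C, componentBound d (#(s C) / 2) := by omega
    _ ≤ chvatalHansonBound d (∑ C, #(s C) / 2) := sum_componentBound_le _ _ _
    _ ≤ chvatalHansonBound d (#(movedPoints f) / 2) := chvatalHansonBound_mono d hsum

theorem card_edgeFinset_le_chvatalHansonBound {d : ℕ} (hdeg : ∀ v, G.degree v ≤ d)
    {f : V → V} (hf : G.IsMaxMatchingInvolution f) :
    #G.edgeFinset ≤ chvatalHansonBound d (#(movedPoints f) / 2) := by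
  induction hE : #G.edgeFinset using Nat.strong_induction_on generalizing G f with
  | _ n ih =>
  by_cases hess : ∃ v, 0 < G.degree v ∧ ∀ g, G.IsMaxMatchingInvolution g → g v ≠ v
  · obtain ⟨v, hv, hess⟩ := hess
    obtain ⟨f', hf'⟩ := (G.deleteIncidenceSet v).exists_isMaxMatchingInvolution
    have hf'G := hf'.mono (G.deleteIncidenceSet_le v)
    have hf'v : f' v = v := by
      by_contra h
      simpa using (deleteIncidenceSet_adj.1 (hf'.adj v h)).2.1
    have hlt : #(movedPoints f') < #(movedPoints f) :=
      (hf.card_movedPoints_le f' hf'G).lt_of_ne fun heq =>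
        hess f' ⟨hf'G, fun g hg => heq ▸ hf.card_movedPoints_le g hg⟩ hf'v
    have hsucc : #(movedPoints f') / 2 + 1 ≤ #(movedPoints f) / 2 := by
      obtain ⟨a, ha⟩ := hf'.involutive.even_card_movedPoints
      obtain ⟨b, hb⟩ := hf.involutive.even_card_movedPoints
      omega
    have hE' := G.card_edgeFinset_deleteIncidenceSet v
    have hvE := G.degree_le_card_edgeFinset v
    have hIH := ih _ (by omega)
      (fun w => (degree_le_of_le (G.deleteIncidenceSet_le v)).trans (hdeg w)) hf' rfl
    calc n ≤ chvatalHansonBound d (#(movedPoints f') / 2) + d := by have := hdeg v; omega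
      _ ≤ chvatalHansonBound d (#(movedPoints f') / 2 + 1) := chvatalHansonBound_add_le_succ _ _
      _ ≤ chvatalHansonBound d (#(movedPoints f) / 2) := chvatalHansonBound_mono d hsucc
  · push Not at hess
    refine hE ▸ card_edgeFinset_le_of_forall_exists_fixed hdeg (fun w => ?_) hf
    rcases (G.degree w).eq_zero_or_pos with h0 | hpos
    · refine ⟨f, hf, by_contra fun h => ?_⟩
      simpa [h0] using G.degree_pos_iff_exists_adj w |>.2 ⟨_, hf.adj w h⟩
    · exact hess w hpos

end SimpleGraph

theorem edge_bound_of_maxDegree_matchingNumber_general {V : Type*} [Fintype V]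
    (G : SimpleGraph V) [DecidableRel G.Adj] :
    G.edgeFinset.card ≤ matchingNumber G * G.maxDegree +
      (G.maxDegree / 2) * (matchingNumber G / ((G.maxDegree + 1) / 2)) := by
  classical
  obtain ⟨f, hf⟩ := G.exists_isMaxMatchingInvolution
  calc #G.edgeFinset ≤ chvatalHansonBound G.maxDegree (#(movedPoints f) / 2) :=
        card_edgeFinset_le_chvatalHansonBound G.degree_le_maxDegree hf
    _ ≤ chvatalHansonBound G.maxDegree (matchingNumber G) :=
        chvatalHansonBound_mono _ hf.card_movedPoints_div_two_le_matchingNumber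

/-- Hanson et al.: for any graph with maximum degree `Δ ≥ 1` and matching number `ν ≥ 1`,
`e(G) ≤ νΔ + ⌊Δ/2⌋⌊ν/⌈Δ/2⌉⌋`. -/
theorem edge_bound_of_maxDegree_matchingNumber {V : Type*} [Fintype V]
    (G : SimpleGraph V) [DecidableRel G.Adj]
    (hΔ : 1 ≤ G.maxDegree) (hν : 1 ≤ matchingNumber G) :
    G.edgeFinset.card ≤ matchingNumber G * G.maxDegree +
      (G.maxDegree / 2) * (matchingNumber G / ((G.maxDegree + 1) / 2)) :=
  edge_bound_of_maxDegree_matchingNumber_general G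
end

section
/- If a graph G has maximum degree at most k−1 and matching number at most k−1, then e(G) ≤ k(k−1). -/
open SimpleGraph

/-!
We prove `e(G) ≤ ν(G) (Δ(G) + 1)` by induction on the number of edges. If two non-isolated
vertices lie in different components, split `G` along a component: edges add up and matching
numbers are superadditive. If some vertex `w` is covered by every maximum matching, deleting its
edges lowers `ν` by one and removes at most `Δ` edges. Otherwise Gallai's lemma says that a maximum
matching misses at most one non-isolated vertex, so there are at most `2ν + 1` of them, each of
degree at most `min Δ (2ν)`, and the handshake lemma gives `2e ≤ (2ν + 1) min Δ (2ν) ≤ 2ν (Δ + 1)`.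
For `ν, Δ ≤ k - 1` this is `e(G) ≤ k (k - 1)`.
-/

namespace SimpleGraph

variable {V : Type*} {G H : SimpleGraph V} {M N : Finset (Sym2 V)} {u v w x y : V}

-- Matchings as finite edge sets, which are easier to edit than `Subgraph.IsMatching`.
structure IsEdgeMatching (G : SimpleGraph V) (M : Finset (Sym2 V)) : Prop where
  subset_edgeSet : ↑M ⊆ G.edgeSet
  eq_of_mem_of_mem : ∀ ⦃e⦄, e ∈ M → ∀ ⦃f⦄, f ∈ M → ∀ ⦃x⦄, x ∈ e → x ∈ f → e = f

structure IsMaximumEdgeMatching (G : SimpleGraph V) (M : Finset (Sym2 V)) : Prop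
    extends G.IsEdgeMatching M where
  card_eq : M.card = matchingNumber G

def Covers (M : Finset (Sym2 V)) (x : V) : Prop := ∃ e ∈ M, x ∈ e

lemma Covers.exists_mk_mem (h : Covers M x) : ∃ y, s(x, y) ∈ M := by
  obtain ⟨e, he, hx⟩ := h
  obtain ⟨y, rfl⟩ := Sym2.mem_iff_exists.1 hx
  exact ⟨y, he⟩

lemma covers_of_mk_mem (h : s(x, y) ∈ M) : Covers M x := ⟨_, h, Sym2.mem_mk_left x y⟩

lemma covers_insert [DecidableEq V] {f : Sym2 V} :
    Covers (insert f M) x ↔ x ∈ f ∨ Covers M x := by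
  simp [Covers]

namespace IsEdgeMatching

lemma adj_of_mk_mem (hM : G.IsEdgeMatching M) (h : s(x, y) ∈ M) : G.Adj x y :=
  hM.subset_edgeSet h

lemma mono (hM : G.IsEdgeMatching M) (hGH : G ≤ H) : H.IsEdgeMatching M :=
  ⟨hM.subset_edgeSet.trans (edgeSet_mono hGH), hM.eq_of_mem_of_mem⟩

lemma subset (hM : G.IsEdgeMatching M) (hNM : N ⊆ M) : G.IsEdgeMatching N :=
  ⟨(Finset.coe_subset.2 hNM).trans hM.subset_edgeSet,
    fun _ he _ hf => hM.eq_of_mem_of_mem (hNM he) (hNM hf)⟩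

lemma insert [DecidableEq V] (hM : G.IsEdgeMatching M) {f : Sym2 V} (hf : f ∈ G.edgeSet)
    (hfM : ∀ x ∈ f, ¬Covers M x) : G.IsEdgeMatching (insert f M) := by
  refine ⟨by simpa [Set.insert_subset_iff] using ⟨hf, hM.subset_edgeSet⟩, ?_⟩
  simp only [Finset.mem_insert]
  rintro e (rfl | he) g (rfl | hg) x hxe hxg
  · rfl
  · exact absurd ⟨g, hg, hxg⟩ (hfM x hxe)
  · exact absurd ⟨e, he, hxe⟩ (hfM x hxg)
  · exact hM.eq_of_mem_of_mem he hg hxe hxg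

lemma union [DecidableEq V] (hM : G.IsEdgeMatching M) (hN : G.IsEdgeMatching N)
    (hMN : ∀ x, Covers M x → ¬Covers N x) : G.IsEdgeMatching (M ∪ N) := by
  refine ⟨by simpa using ⟨hM.subset_edgeSet, hN.subset_edgeSet⟩, ?_⟩
  simp only [Finset.mem_union]
  rintro e (he | he) f (hf | hf) x hxe hxf
  · exact hM.eq_of_mem_of_mem he hf hxe hxf
  · exact absurd ⟨f, hf, hxf⟩ (hMN x ⟨e, he, hxe⟩)
  · exact absurd ⟨e, he, hxe⟩ (hMN x ⟨f, hf, hxf⟩)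
  · exact hN.eq_of_mem_of_mem he hf hxe hxf

end IsEdgeMatching

lemma bddAbove_ncard_edgeSet_isMatching [Finite V] (G : SimpleGraph V) :
    BddAbove {m | ∃ M : G.Subgraph, M.IsMatching ∧ M.edgeSet.ncard = m} :=
  ⟨Nat.card (Sym2 V), by rintro _ ⟨M, -, rfl⟩; exact Set.ncard_le_card _⟩

lemma IsEdgeMatching.card_le_matchingNumber [Finite V] (hM : G.IsEdgeMatching M) :
    M.card ≤ matchingNumber G := by
  let S : G.Subgraph :=
    { verts := {x | Covers M x}
      Adj := fun x y => s(x, y) ∈ M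
      adj_sub := hM.adj_of_mk_mem
      edge_vert := covers_of_mk_mem
      symm := ⟨fun x y h => by rwa [Sym2.eq_swap]⟩ }
  have hS : S.IsMatching := by
    intro x hx
    obtain ⟨y, hy⟩ := Covers.exists_mk_mem hx
    refine ⟨y, hy, fun z hz => ?_⟩
    exact Sym2.congr_right.1 (hM.eq_of_mem_of_mem hz hy (Sym2.mem_mk_left x z)
      (Sym2.mem_mk_left x y))
  have hSM : S.edgeSet = M := by
    ext e
    induction e with | _ x y => rfl
  refine le_csSup G.bddAbove_ncard_edgeSet_isMatching ⟨S, hS, ?_⟩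
  rw [hSM, Set.ncard_coe_finset]

lemma exists_isMaximumEdgeMatching [Finite V] (G : SimpleGraph V) :
    ∃ M, G.IsMaximumEdgeMatching M := by
  obtain ⟨S, hS, hcard⟩ :=
    Nat.sSup_mem (s := {m | ∃ M : G.Subgraph, M.IsMatching ∧ M.edgeSet.ncard = m})
      ⟨0, ⊥, fun _ h => h.elim, by simp⟩ G.bddAbove_ncard_edgeSet_isMatching
  refine ⟨S.edgeSet.toFinite.toFinset, ⟨?_, ?_⟩, ?_⟩
  · simpa using S.edgeSet_subset
  · simp only [Set.Finite.mem_toFinset]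
    intro e he f hf x hxe hxf
    obtain ⟨y, rfl⟩ := Sym2.mem_iff_exists.1 hxe
    obtain ⟨z, rfl⟩ := Sym2.mem_iff_exists.1 hxf
    rw [hS.eq_of_adj_left (S.mem_edgeSet.1 he) (S.mem_edgeSet.1 hf)]
  · rw [← Set.ncard_eq_toFinset_card, hcard]
    rfl

lemma IsMaximumEdgeMatching.not_adj [Finite V] (hM : G.IsMaximumEdgeMatching M)
    (hu : ¬Covers M u) (hv : ¬Covers M v) : ¬G.Adj u v := by
  classical
  intro huv
  have hins := hM.insert (f := s(u, v)) huv fun x hx => by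
    rcases Sym2.mem_iff.1 hx with rfl | rfl <;> assumption
  have := hins.card_le_matchingNumber
  rw [Finset.card_insert_of_notMem fun h => hu (covers_of_mk_mem h), hM.card_eq] at this
  omega

lemma IsMaximumEdgeMatching.covers_of_adj [Finite V]
    (hM : G.IsMaximumEdgeMatching M) (hu : ¬Covers M u) (huv : G.Adj u v) : Covers M v :=
  not_not.1 fun hv => hM.not_adj hu hv huv

section Exchange

variable [DecidableEq V]

def swapEdge (M : Finset (Sym2 V)) (a b c : V) : Finset (Sym2 V) :=
  insert s(b, c) (M.erase s(a, b))

variable {a b c : V}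

lemma swapEdge_subset : swapEdge M a b c ⊆ insert s(b, c) M :=
  Finset.insert_subset_insert _ (Finset.erase_subset _ _)

lemma IsEdgeMatching.covers_swapEdge (hM : G.IsEdgeMatching M) (hab : s(a, b) ∈ M) :
    Covers (swapEdge M a b c) x ↔ (Covers M x ∧ x ≠ a) ∨ x = c := by
  have hba : b ≠ a := (hM.adj_of_mk_mem hab).ne.symm
  rw [swapEdge, covers_insert, Sym2.mem_iff]
  constructor
  · rintro ((rfl | rfl) | ⟨e, he, hxe⟩)
    · exact Or.inl ⟨covers_of_mk_mem (Sym2.eq_swap ▸ hab), hba⟩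
    · exact Or.inr rfl
    · refine Or.inl ⟨⟨e, Finset.mem_of_mem_erase he, hxe⟩, ?_⟩
      rintro rfl
      exact Finset.ne_of_mem_erase he
        (hM.eq_of_mem_of_mem (Finset.mem_of_mem_erase he) hab hxe (Sym2.mem_mk_left _ _))
  · rintro (⟨⟨e, he, hxe⟩, hxa⟩ | rfl)
    · by_cases heab : e = s(a, b)
      · subst heab
        exact Or.inl (Or.inl ((Sym2.mem_iff.1 hxe).resolve_left hxa))
      · exact Or.inr ⟨e, Finset.mem_erase.2 ⟨heab, he⟩, hxe⟩
    · exact Or.inl (Or.inr rfl)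

lemma IsEdgeMatching.swapEdge (hM : G.IsEdgeMatching M) (hab : s(a, b) ∈ M) (hc : ¬Covers M c)
    (hbc : G.Adj b c) : G.IsEdgeMatching (swapEdge M a b c) := by
  refine (hM.subset (Finset.erase_subset _ _)).insert hbc fun x hx ⟨e, he, hxe⟩ => ?_
  have heM := Finset.mem_of_mem_erase he
  rcases Sym2.mem_iff.1 hx with rfl | rfl
  · exact Finset.ne_of_mem_erase he
      (hM.eq_of_mem_of_mem heM hab hxe (Sym2.mem_mk_right _ _))
  · exact hc ⟨e, heM, hxe⟩

lemma IsMaximumEdgeMatching.swapEdge (hM : G.IsMaximumEdgeMatching M) (hab : s(a, b) ∈ M)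
    (hc : ¬Covers M c) (hbc : G.Adj b c) : G.IsMaximumEdgeMatching (swapEdge M a b c) := by
  refine ⟨hM.toIsEdgeMatching.swapEdge hab hc hbc, ?_⟩
  have hbc : s(b, c) ∉ M.erase s(a, b) := fun h =>
    hc (covers_of_mk_mem (Sym2.eq_swap ▸ Finset.mem_of_mem_erase h))
  rw [SimpleGraph.swapEdge, Finset.card_insert_of_notMem hbc,
    Finset.card_erase_add_one hab, hM.card_eq]

lemma card_sdiff_swapEdge_lt (hab : s(a, b) ∈ N) (habM : s(a, b) ∉ M) (hbc : s(b, c) ∈ M) :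
    (swapEdge N a b c \ M).card < (N \ M).card := by
  refine (Finset.card_le_card fun e he => ?_).trans_lt
    (Finset.card_erase_lt_of_mem (Finset.mem_sdiff.2 ⟨hab, habM⟩))
  simp only [swapEdge, Finset.mem_sdiff, Finset.mem_insert, Finset.mem_erase] at he ⊢
  rcases he with ⟨rfl | ⟨hne, heN⟩, heM⟩
  · exact absurd hbc heM
  · exact ⟨hne, heN, heM⟩

end Exchange

-- Exchange along the alternating path of `M` and `N` that starts at `w`.
theorem IsMaximumEdgeMatching.exists_exchange [Finite V] [DecidableEq V]
    (hM : G.IsMaximumEdgeMatching M) (hN : G.IsMaximumEdgeMatching N) (hMw : Covers M w)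
    (hNw : ¬Covers N w) :
    ∃ M', G.IsMaximumEdgeMatching M' ∧ M' ⊆ M ∪ N ∧
      ∃ y, ¬Covers M y ∧ ∀ z, Covers M' z ↔ (Covers M z ∧ z ≠ w) ∨ z = y := by
  induction hn : (N \ M).card using Nat.strong_induction_on generalizing N w with
  | _ n ih =>
  obtain ⟨w₁, hw₁⟩ := hMw.exists_mk_mem
  have hww₁ := hM.adj_of_mk_mem hw₁
  obtain ⟨w₂, hw₂⟩ := (hN.covers_of_adj hNw hww₁).exists_mk_mem
  have hw₂w : w₂ ≠ w := by rintro rfl; exact hNw ⟨_, hw₂, Sym2.mem_mk_right _ _⟩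
  rcases em' (Covers M w₂) with hMw₂ | hMw₂
  · refine ⟨SimpleGraph.swapEdge M w w₁ w₂, hM.swapEdge hw₁ hMw₂ (hN.adj_of_mk_mem hw₂), ?_,
      w₂, hMw₂, fun z => hM.covers_swapEdge hw₁⟩
    exact swapEdge_subset.trans (Finset.insert_subset (by simp [hw₂]) Finset.subset_union_left)
  -- Move `N` one step towards `M` along the alternating path, then recurse from `w₂`.
  have hw₂₁ : s(w₂, w₁) ∈ N := Sym2.eq_swap ▸ hw₂
  have hNt := hN.swapEdge hw₂₁ hNw hww₁.symm
  have hNtw₂ : ¬Covers (SimpleGraph.swapEdge N w₂ w₁ w) w₂ := by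
    rw [hN.covers_swapEdge hw₂₁]
    tauto
  have hlt : (SimpleGraph.swapEdge N w₂ w₁ w \ M).card < n := hn ▸ card_sdiff_swapEdge_lt hw₂₁
    (fun h => hw₂w <| Sym2.congr_left.1 <|
      hM.eq_of_mem_of_mem h hw₁ (Sym2.mem_mk_right _ _) (Sym2.mem_mk_right _ _))
    (Sym2.eq_swap ▸ hw₁)
  obtain ⟨M', hM', hM'sub, y, hyM, hM'cov⟩ := ih _ hlt hNt hMw₂ hNtw₂ rfl
  have hyw₂ : y ≠ w₂ := by rintro rfl; exact hyM hMw₂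
  have hyw : y ≠ w := by rintro rfl; exact hyM hMw
  have hww₁M' : s(w, w₁) ∈ M' := by
    obtain ⟨e, he, hwe⟩ := (hM'cov w).2 (Or.inl ⟨hMw, hw₂w.symm⟩)
    suffices e = s(w, w₁) from this ▸ he
    rcases Finset.mem_union.1 (hM'sub he) with heM | heN
    · exact hM.eq_of_mem_of_mem heM hw₁ hwe (Sym2.mem_mk_left _ _)
    · rcases Finset.mem_insert.1 heN with rfl | heN
      · exact Sym2.eq_swap
      · exact absurd ⟨e, Finset.mem_of_mem_erase heN, hwe⟩ hNw
  have hM'w₂ : ¬Covers M' w₂ := by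
    rw [hM'cov]
    tauto
  refine ⟨SimpleGraph.swapEdge M' w w₁ w₂, hM'.swapEdge hww₁M' hM'w₂ (hN.adj_of_mk_mem hw₂), ?_,
    y, hyM, fun z => ?_⟩
  · refine swapEdge_subset.trans (Finset.insert_subset (Finset.mem_union_right _ hw₂) ?_)
    refine hM'sub.trans (Finset.union_subset Finset.subset_union_left ?_)
    exact swapEdge_subset.trans <| Finset.insert_subset
      (Finset.mem_union_left _ (Sym2.eq_swap ▸ hw₁)) Finset.subset_union_right
  · rw [hM'.covers_swapEdge hww₁M', hM'cov]
    grind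

-- Gallai's lemma.
theorem IsMaximumEdgeMatching.eq_of_not_covers [Finite V]
    (hG : ∀ w, ∃ N, G.IsMaximumEdgeMatching N ∧ ¬Covers N w) (hM : G.IsMaximumEdgeMatching M)
    (huv : G.Reachable u v) (hMu : ¬Covers M u) (hMv : ¬Covers M v) :
    u = v := by
  classical
  -- Induct on `dist u v`. Exchanging at the neighbour `w` of `u` towards `v` gives a maximum
  -- matching that misses `w` and one of `u`, `v`.
  induction hn : G.dist u v using Nat.strong_induction_on generalizing M u with
  | _ n ih =>
  obtain ⟨p, hp⟩ := huv.exists_walk_length_eq_dist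
  cases p with
  | nil => rfl
  | @cons _ w _ huw q =>
  by_contra hne
  have hwv : G.dist w v < n := hn ▸ hp ▸ (G.dist_le q).trans_lt (Nat.lt_succ_self _)
  have hMw := hM.covers_of_adj hMu huw
  obtain ⟨N, hN, hNw⟩ := hG w
  obtain ⟨M', hM', -, y, hyM, hcov⟩ := hM.exists_exchange hN hMw hNw
  have hM'w : ¬Covers M' w := by
    rw [hcov]
    rintro (⟨-, hww⟩ | rfl)
    exacts [hww rfl, hyM hMw]
  by_cases hyu : y = u
  · subst hyu
    have hM'v : ¬Covers M' v := by
      rw [hcov]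
      rintro (⟨hv, -⟩ | rfl)
      exacts [hMv hv, hne rfl]
    exact hMv (ih _ hwv hM' ⟨q⟩ hM'w hM'v rfl ▸ hMw)
  · refine hM'.not_adj ?_ hM'w huw
    rw [hcov]
    rintro (⟨hu, -⟩ | rfl)
    exacts [hMu hu, hyu rfl]

section Restrict

variable {s : Set V}

def restrict (G : SimpleGraph V) (s : Set V) : SimpleGraph V where
  Adj x y := G.Adj x y ∧ x ∈ s ∧ y ∈ s
  symm := ⟨fun _ _ h => ⟨h.1.symm, h.2.2, h.2.1⟩⟩
  loopless := ⟨fun _ h => h.1.ne rfl⟩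

lemma restrict_le : G.restrict s ≤ G := fun _ _ h => h.1

lemma restrict_sup_restrict_compl (hs : ∀ x y, G.Adj x y → x ∈ s → y ∈ s) :
    G.restrict s ⊔ G.restrict sᶜ = G := by
  ext x y
  refine ⟨fun h => h.elim (·.1) (·.1), fun h => ?_⟩
  by_cases hx : x ∈ s
  · exact Or.inl ⟨h, hx, hs x y h hx⟩
  · exact Or.inr ⟨h, hx, fun hy => hx (hs y x h.symm hy)⟩

lemma disjoint_restrict_restrict_compl : Disjoint (G.restrict s) (G.restrict sᶜ) :=
  disjoint_left.2 fun _ _ h h' => h'.2.1 h.2.1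

lemma ncard_edgeSet_restrict_add_compl [Finite V] (hs : ∀ x y, G.Adj x y → x ∈ s → y ∈ s) :
    (G.restrict s).edgeSet.ncard + (G.restrict sᶜ).edgeSet.ncard = G.edgeSet.ncard := by
  conv_rhs => rw [← restrict_sup_restrict_compl hs, edgeSet_sup]
  exact (Set.ncard_union_eq (disjoint_edgeSet.2 disjoint_restrict_restrict_compl)).symm

lemma IsEdgeMatching.mem_of_covers_restrict (hM : (G.restrict s).IsEdgeMatching M)
    (hx : Covers M x) : x ∈ s := by
  obtain ⟨y, hy⟩ := hx.exists_mk_mem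
  exact (hM.adj_of_mk_mem hy).2.1

lemma matchingNumber_restrict_add_compl_le [Finite V] :
    matchingNumber (G.restrict s) + matchingNumber (G.restrict sᶜ) ≤ matchingNumber G := by
  classical
  obtain ⟨A, hA⟩ := (G.restrict s).exists_isMaximumEdgeMatching
  obtain ⟨B, hB⟩ := (G.restrict sᶜ).exists_isMaximumEdgeMatching
  have hAB : ∀ x, Covers A x → ¬Covers B x := fun x hxA hxB =>
    hB.mem_of_covers_restrict hxB (hA.mem_of_covers_restrict hxA)
  have hdisj : Disjoint A B := Finset.disjoint_left.2 fun e heA heB => by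
    induction e with | _ x y => exact hAB x (covers_of_mk_mem heA) (covers_of_mk_mem heB)
  rw [← hA.card_eq, ← hB.card_eq, ← Finset.card_union_of_disjoint hdisj]
  exact ((hA.mono restrict_le).union (hB.mono restrict_le) hAB).card_le_matchingNumber

end Restrict

lemma IsEdgeMatching.not_covers_deleteIncidenceSet
    (hM : (G.deleteIncidenceSet w).IsEdgeMatching M) : ¬Covers M w := fun hw => by
  obtain ⟨y, hy⟩ := hw.exists_mk_mem
  exact (deleteIncidenceSet_adj.1 (hM.adj_of_mk_mem hy)).2.1 rfl

lemma ncard_edgeSet_deleteIncidenceSet_add [Finite V] (G : SimpleGraph V) (w : V) :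
    (G.deleteIncidenceSet w).edgeSet.ncard + (G.neighborSet w).ncard = G.edgeSet.ncard := by
  classical
  rw [edgeSet_deleteIncidenceSet, ← Nat.card_coe_set_eq (G.neighborSet w),
    ← Nat.card_congr (G.incidenceSetEquivNeighborSet w), Nat.card_coe_set_eq,
    Set.ncard_sdiff_add_ncard_of_subset (G.incidenceSet_subset w)]

lemma matchingNumber_deleteIncidenceSet_lt [Finite V]
    (hw : ∀ M, G.IsMaximumEdgeMatching M → Covers M w) :
    matchingNumber (G.deleteIncidenceSet w) < matchingNumber G := by
  obtain ⟨M, hM⟩ := (G.deleteIncidenceSet w).exists_isMaximumEdgeMatching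
  have hMG := hM.mono (G.deleteIncidenceSet_le w)
  rw [← hM.card_eq]
  refine hMG.card_le_matchingNumber.lt_of_ne fun h => ?_
  exact hM.not_covers_deleteIncidenceSet (hw M ⟨hMG, h⟩)

lemma ncard_covers_le (M : Finset (Sym2 V)) : {x | Covers M x}.ncard ≤ 2 * M.card := by
  classical
  have hM : {x | Covers M x} = ↑(M.biUnion Sym2.toFinset) := by
    ext x
    simp [Covers]
  rw [hM, Set.ncard_coe_finset, mul_comm]
  exact Finset.card_biUnion_le_card_mul _ _ _ fun e _ => by
    rw [Sym2.card_toFinset]; split <;> omega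

lemma ncard_support_le [Finite V] (M : Finset (Sym2 V))
    (h : ∀ u ∈ G.support, ∀ v ∈ G.support, ¬Covers M u → ¬Covers M v → u = v) :
    G.support.ncard ≤ 2 * M.card + 1 := by
  have hsub : G.support ⊆ {x | Covers M x} ∪ (G.support \ {x | Covers M x}) := by
    intro x hx
    by_cases hxM : Covers M x
    exacts [Or.inl hxM, Or.inr ⟨hx, hxM⟩]
  have hrest : (G.support \ {x | Covers M x}).ncard ≤ 1 :=
    (Set.ncard_le_one_iff (Set.toFinite _)).2 fun hu hv => h _ hu.1 _ hv.1 hu.2 hv.2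
  exact (Set.ncard_le_ncard hsub).trans <|
    (Set.ncard_union_le _ _).trans (add_le_add (ncard_covers_le M) hrest)

lemma ncard_neighborSet_eq_degree (G : SimpleGraph V) [Fintype V] [DecidableRel G.Adj] (v : V) :
    (G.neighborSet v).ncard = G.degree v := by
  rw [← Nat.card_coe_set_eq, Nat.card_eq_fintype_card, card_neighborSet_eq_degree]

lemma ncard_edgeSet_eq_card_edgeFinset (G : SimpleGraph V) [Fintype G.edgeSet] :
    G.edgeSet.ncard = G.edgeFinset.card :=
  Set.ncard_eq_toFinset_card' _

lemma two_mul_ncard_edgeSet_le [Finite V] {m : ℕ}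
    (hm : ∀ v ∈ G.support, (G.neighborSet v).ncard ≤ m) :
    2 * G.edgeSet.ncard ≤ G.support.ncard * m := by
  classical
  have := Fintype.ofFinite V
  rw [ncard_edgeSet_eq_card_edgeFinset, ← sum_degrees_support_eq_twice_card_edges,
    Set.ncard_eq_toFinset_card']
  exact Finset.sum_le_card_nsmul _ _ _ fun v hv =>
    G.ncard_neighborSet_eq_degree v ▸ hm v (Set.mem_toFinset.1 hv)

lemma ncard_neighborSet_le_ncard_support_sub_one [Finite V] (v : V) :
    (G.neighborSet v).ncard ≤ G.support.ncard - 1 := by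
  by_cases hv : v ∈ G.support
  · rw [← Set.ncard_sdiff_singleton_of_mem hv]
    exact Set.ncard_le_ncard fun w hw => ⟨G.neighborSet_subset_support v hw, (G.ne_of_adj hw).symm⟩
  · rw [(Set.ncard_eq_zero (Set.toFinite _)).2]
    · exact Nat.zero_le _
    · exact Set.eq_empty_of_forall_notMem fun w hw => hv ⟨w, hw⟩

-- Handshake lemma, with every degree at most `min d (2k)`.
lemma ncard_edgeSet_le_of_ncard_support_le [Finite V] {d k : ℕ}
    (hd : ∀ v, (G.neighborSet v).ncard ≤ d) (hs : G.support.ncard ≤ 2 * k + 1) :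
    G.edgeSet.ncard ≤ k * (d + 1) := by
  have h := two_mul_ncard_edgeSet_le (G := G) (m := min d (G.support.ncard - 1))
    fun v _ => le_min (hd v) (ncard_neighborSet_le_ncard_support_sub_one v)
  have h₁ : min d (G.support.ncard - 1) ≤ d := min_le_left _ _
  have h₂ : min d (G.support.ncard - 1) ≤ 2 * k := (min_le_right _ _).trans (by omega)
  nlinarith [Nat.mul_le_mul_right (min d (G.support.ncard - 1)) hs,
    Nat.mul_le_mul_left (2 * k) h₁]

lemma ncard_neighborSet_le_of_le [Finite V] (h : H ≤ G) (v : V) :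
    (H.neighborSet v).ncard ≤ (G.neighborSet v).ncard :=
  Set.ncard_le_ncard (neighborSet_mono h v)

theorem ncard_edgeSet_le_matchingNumber_mul_add_one [Finite V] {d : ℕ}
    (hd : ∀ v, (G.neighborSet v).ncard ≤ d) :
    G.edgeSet.ncard ≤ matchingNumber G * (d + 1) := by
  induction hn : G.edgeSet.ncard using Nat.strong_induction_on generalizing G with
  | _ n ih =>
  subst hn
  have ih' : ∀ H ≤ G, H.edgeSet.ncard < G.edgeSet.ncard →
      H.edgeSet.ncard ≤ matchingNumber H * (d + 1) := fun H hH hlt =>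
    ih _ hlt (fun v => (ncard_neighborSet_le_of_le hH v).trans (hd v)) rfl
  by_cases hconn : ∀ u ∈ G.support, ∀ v ∈ G.support, G.Reachable u v
  · by_cases hG : ∀ w, ∃ N, G.IsMaximumEdgeMatching N ∧ ¬Covers N w
    · obtain ⟨M, hM⟩ := G.exists_isMaximumEdgeMatching
      refine ncard_edgeSet_le_of_ncard_support_le hd (hM.card_eq ▸ ncard_support_le M ?_)
      exact fun u hu v hv hMu hMv => hM.eq_of_not_covers hG (hconn u hu v hv) hMu hMv
    · push Not at hG
      obtain ⟨w, hw⟩ := hG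
      obtain ⟨M, hM⟩ := G.exists_isMaximumEdgeMatching
      obtain ⟨x, hx⟩ := (hw M hM).exists_mk_mem
      have hdel := G.ncard_edgeSet_deleteIncidenceSet_add w
      have hpos : 0 < (G.neighborSet w).ncard :=
        (Set.ncard_pos (Set.toFinite _)).2 ⟨x, hM.adj_of_mk_mem hx⟩
      have hlt := matchingNumber_deleteIncidenceSet_lt hw
      have hdelG := ih' _ (G.deleteIncidenceSet_le w) (by omega)
      have hdw := hd w
      nlinarith
  · push Not at hconn
    obtain ⟨a, ⟨a', ha'⟩, b, ⟨b', hb'⟩, hab⟩ := hconn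
    set s : Set V := {x | G.Reachable a x}
    have hs : ∀ x y, G.Adj x y → x ∈ s → y ∈ s := fun x y h hx => hx.trans h.reachable
    have hsplit := ncard_edgeSet_restrict_add_compl hs
    have hA : 0 < (G.restrict s).edgeSet.ncard :=
      (Set.ncard_pos (Set.toFinite _)).2 ⟨s(a, a'), ha', Reachable.refl a, ha'.reachable⟩
    have hB : 0 < (G.restrict sᶜ).edgeSet.ncard :=
      (Set.ncard_pos (Set.toFinite _)).2
        ⟨s(b, b'), hb', hab, fun h => hab (h.trans hb'.symm.reachable)⟩
    have h₁ := ih' _ (restrict_le (s := s)) (by omega)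
    have h₂ := ih' _ (restrict_le (s := sᶜ)) (by omega)
    have hν := matchingNumber_restrict_add_compl_le (G := G) (s := s)
    nlinarith

theorem card_edgeFinset_le_matchingNumber_mul_maxDegree_add_one [Fintype V]
    [DecidableRel G.Adj] : G.edgeFinset.card ≤ matchingNumber G * (G.maxDegree + 1) := by
  rw [← ncard_edgeSet_eq_card_edgeFinset]
  exact ncard_edgeSet_le_matchingNumber_mul_add_one fun v =>
    G.ncard_neighborSet_eq_degree v ▸ G.degree_le_maxDegree v

end SimpleGraph

theorem edge_bound_of_small_maxDegree_matchingNumber_general {V : Type*} [Fintype V]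
    (G : SimpleGraph V) [DecidableRel G.Adj] (k : ℕ)
    (hΔ : G.maxDegree ≤ k - 1) (hν : matchingNumber G ≤ k - 1) :
    G.edgeFinset.card ≤ k * (k - 1) :=
  calc G.edgeFinset.card ≤ matchingNumber G * (G.maxDegree + 1) :=
        card_edgeFinset_le_matchingNumber_mul_maxDegree_add_one
    _ ≤ (k - 1) * (k - 1 + 1) := by gcongr
    _ = k * (k - 1) := by cases k <;> simp [mul_comm]

/-- If `Δ(G) ≤ k-1` and `ν(G) ≤ k-1` then `e(G) ≤ k(k-1)`. -/
theorem edge_bound_of_small_maxDegree_matchingNumber {V : Type*} [Fintype V]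
    (G : SimpleGraph V) [DecidableRel G.Adj] (k : ℕ) (hk : 1 ≤ k)
    (hΔ : G.maxDegree ≤ k - 1) (hν : matchingNumber G ≤ k - 1) :
    G.edgeFinset.card ≤ k * (k - 1) :=
  edge_bound_of_small_maxDegree_matchingNumber_general G k hΔ hν
end

section
/- Let n = n₁ + … + n_{r−1} with n_i ≥ 0 and max_i |n_i − n/(r−1)| = a, achieved by n₁. Then Σ_{1≤i<j≤r−1} n_i n_j ≤ n₁(n−n₁) + (1 − 1/(r−2))·(n−n₁)²/2 ≤ −(r−1)a²/(2(r−2)) + (r−2)n²/(2(r−1)). -/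
/-!
Write `x = n₁` and `m = r - 1`. Since `2 Σ_{i<j} n_i n_j = n² - Σ n_i²`, an upper bound on the
pair sum is a lower bound on `Σ_{j≥2} n_j²`, and by Cauchy–Schwarz that sum is at least
`(n - x)² / (m - 1)`; this gives the first bound. The second is in fact an identity in `x`: completing the square around
`x = n/m` turns the middle expression into `-m (x - n/m)² / (2(m - 1)) + (m - 1) n² / (2m)`.
-/

open Finset

theorem two_mul_sum_pairs_lt_add_sum_sq {ι R : Type*} [Fintype ι] [LinearOrder ι]
    [CommSemiring R] (f : ι → R) :
    2 * ∑ p ∈ univ.filter (fun p : ι × ι => p.1 < p.2), f p.1 * f p.2 + ∑ i, f i ^ 2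
      = (∑ i, f i) ^ 2 := by
  have hswap : ∑ p ∈ univ.filter (fun p : ι × ι => p.2 < p.1), f p.1 * f p.2
      = ∑ p ∈ univ.filter (fun p : ι × ι => p.1 < p.2), f p.1 * f p.2 :=
    sum_equiv (Equiv.prodComm ι ι) (by simp) (fun _ _ => mul_comm _ _)
  have hdiag : ∑ p ∈ univ.filter (fun p : ι × ι => p.1 = p.2), f p.1 * f p.2 = ∑ i, f i ^ 2 := by
    simp [sum_filter, Fintype.sum_prod_type, sq]
  have htrichotomy : ∑ p : ι × ι, f p.1 * f p.2
      = ∑ p ∈ univ.filter (fun p : ι × ι => p.1 < p.2), f p.1 * f p.2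
        + ∑ p ∈ univ.filter (fun p : ι × ι => p.2 < p.1), f p.1 * f p.2
        + ∑ p ∈ univ.filter (fun p : ι × ι => p.1 = p.2), f p.1 * f p.2 := by
    simp only [sum_filter, ← sum_add_distrib]
    refine sum_congr rfl fun p _ => ?_
    rcases lt_trichotomy p.1 p.2 with h | h | h
    · simp [h, h.ne, h.not_gt]
    · simp [h]
    · simp [h, h.ne', h.not_gt]
  rw [sq, sum_mul_sum, ← Fintype.sum_prod_type', htrichotomy, hswap, hdiag, two_mul]

section OrderedField

variable {ι α : Type*} [Field α] [LinearOrder α] [IsStrictOrderedRing α]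

theorem sq_sum_div_card_le_sum_sq (s : Finset ι) (f : ι → α) :
    (∑ i ∈ s, f i) ^ 2 / #s ≤ ∑ i ∈ s, f i ^ 2 :=
  div_le_of_le_mul₀ (Nat.cast_nonneg _) (sum_nonneg fun _ _ => sq_nonneg _)
    (by rw [mul_comm]; exact sq_sum_le_card_mul_sum_sq)

theorem sum_pairs_lt_le [Fintype ι] [LinearOrder ι] (f : ι → α) (z : ι) :
    ∑ p ∈ univ.filter (fun p : ι × ι => p.1 < p.2), f p.1 * f p.2
      ≤ f z * (∑ i, f i - f z)
        + (1 - 1 / ((Fintype.card ι : α) - 1)) * (∑ i, f i - f z) ^ 2 / 2 := by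
  have hsum : ∑ i ∈ univ.erase z, f i = ∑ i, f i - f z := by
    rw [← add_sum_erase univ f (mem_univ z)]; ring
  have hsum_sq : ∑ i, f i ^ 2 = f z ^ 2 + ∑ i ∈ univ.erase z, f i ^ 2 :=
    (add_sum_erase univ (fun i => f i ^ 2) (mem_univ z)).symm
  have hcard : (#(univ.erase z) : α) = (Fintype.card ι : α) - 1 := by
    rw [card_erase_of_mem (mem_univ z), card_univ,
      Nat.cast_sub (Fintype.card_pos_iff.mpr ⟨z⟩), Nat.cast_one]
  have hcs := sq_sum_div_card_le_sum_sq (univ.erase z) f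
  rw [hsum, hcard] at hcs
  have hpairs := two_mul_sum_pairs_lt_add_sum_sq f
  rw [hsum_sq] at hpairs
  have hexpand : (1 - 1 / ((Fintype.card ι : α) - 1)) * (∑ i, f i - f z) ^ 2
      = (∑ i, f i - f z) ^ 2 - (∑ i, f i - f z) ^ 2 / ((Fintype.card ι : α) - 1) := by ring
  linarith

end OrderedField

theorem mul_sub_add_sq_eq_of_sq_sub_div_eq {α : Type*} [Field α] [CharZero α] {m x n a : α}
    (hm : m ≠ 0) (hm1 : m - 1 ≠ 0) (ha : (x - n / m) ^ 2 = a ^ 2) :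
    x * (n - x) + (1 - 1 / (m - 1)) * (n - x) ^ 2 / 2
      = -m * a ^ 2 / (2 * (m - 1)) + (m - 1) * n ^ 2 / (2 * m) := by
  rw [← ha]
  field_simp
  ring

/-- Near-balance computation (Claim 1): if `n₁ + ⋯ + n_{r-1} = n` with `n_i ≥ 0` and
`a = max_i |n_i - n/(r-1)|` is achieved by `n₁`, then
`Σ_{i<j} n_i n_j ≤ n₁(n-n₁) + (1 - 1/(r-2))(n-n₁)²/2
  ≤ -(r-1)a²/(2(r-2)) + (r-2)n²/(2(r-1))`. -/
theorem near_balance (r : ℕ) (hr : 3 ≤ r) (f : Fin (r - 1) → ℝ)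
    (n a : ℝ) (hsum : ∑ i, f i = n)
    (h0 : |f ⟨0, by omega⟩ - n / (r - 1)| = a) :
    (∑ p ∈ Finset.univ.filter (fun p : Fin (r - 1) × Fin (r - 1) => p.1 < p.2),
        f p.1 * f p.2 ≤
      f ⟨0, by omega⟩ * (n - f ⟨0, by omega⟩)
        + (1 - 1 / ((r : ℝ) - 2)) * (n - f ⟨0, by omega⟩) ^ 2 / 2) ∧
    f ⟨0, by omega⟩ * (n - f ⟨0, by omega⟩)
        + (1 - 1 / ((r : ℝ) - 2)) * (n - f ⟨0, by omega⟩) ^ 2 / 2 ≤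
      -((r : ℝ) - 1) * a ^ 2 / (2 * ((r : ℝ) - 2)) + ((r : ℝ) - 2) * n ^ 2 / (2 * ((r : ℝ) - 1)) := by
  have hr' : (3 : ℝ) ≤ r := by exact_mod_cast hr
  have hcard : (Fintype.card (Fin (r - 1)) : ℝ) - 1 = (r : ℝ) - 2 := by
    rw [Fintype.card_fin, Nat.cast_sub (by omega), Nat.cast_one]; ring
  constructor
  · simpa only [hsum, hcard] using sum_pairs_lt_le f ⟨0, by omega⟩
  · have ha : (f ⟨0, by omega⟩ - n / ((r : ℝ) - 1)) ^ 2 = a ^ 2 := by rw [← h0, sq_abs]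
    have h := mul_sub_add_sq_eq_of_sq_sub_div_eq (by linarith) (by linarith) ha
    rw [show (r : ℝ) - 1 - 1 = r - 2 by ring] at h
    exact h.le
end
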